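/- arXiv:2602.21411 — 5 statements merged into one kernel-verified Lean document; each statement's English description precedes it below -/
import Mathlib

section
/- Let 𝒞 be a convexity space with Helly number ω, and let n', t_s, t_a, k be nonnegative integers with n' > max(ω·t_s, ω·t_a + t_s) and 0 ≤ k ≤ t_s. If M is a multiset of n' − t_s + k elements of 𝒞, then safe_{max(k, t_a)}(M) ≠ ∅, where safe_j(M) = ⋂_{A ⊆ M, |A| = |M| − j} conv(A). -/
/-- Convex hull in an abstract convexity space. -/
def hull {α : Type*} (𝒦 : Set (Set α)) (S : Set α) : Set α :=
  ⋂₀ {K | K ∈ 𝒦 ∧ S ⊆ K}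

/-- The Helly property at parameter `h`. -/
def HellyProp {α : Type*} (𝒦 : Set (Set α)) (h : ℕ) : Prop :=
  ∀ F : Finset (Set α), ↑F ⊆ 𝒦 →
    (∀ G ⊆ F, G.card ≤ h → (⋂₀ (G : Set (Set α))).Nonempty) →
    (⋂₀ (F : Set (Set α))).Nonempty

/-- The safe area `safe_j(M)`. -/
def safe {α : Type*} (𝒦 : Set (Set α)) (j : ℕ) (M : Multiset α) : Set α :=
  ⋂ A ∈ {A : Multiset α | A ≤ M ∧ A.card = M.card - j}, hull 𝒦 {x | x ∈ A}

lemma hull_mem {α : Type*} (𝒦 : Set (Set α)) (hinter : ∀ 𝒜 ⊆ 𝒦, ⋂₀ 𝒜 ∈ 𝒦)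
    (S : Set α) : hull 𝒦 S ∈ 𝒦 :=
  hinter _ (fun _ hK => hK.1)

lemma subset_hull {α : Type*} (𝒦 : Set (Set α)) (S : Set α) : S ⊆ hull 𝒦 S :=
  fun _ hx _ hK => hK.2 hx

/-- In a convexity space with Helly number `ω`, if
`n' > max(ω·t_s, ω·t_a + t_s)` and `0 ≤ k ≤ t_s`, and `M` has `n' − t_s + k`
elements, then `safe_{max(k, t_a)}(M) ≠ ∅`. -/
theorem stmt4 {α : Type*} (𝒦 : Set (Set α))
    (hempty : ∅ ∈ 𝒦) (huniv : Set.univ ∈ 𝒦)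
    (hinter : ∀ 𝒜 ⊆ 𝒦, ⋂₀ 𝒜 ∈ 𝒦)
    (ω : ℕ) (hHelly : IsLeast {h : ℕ | HellyProp 𝒦 h} ω)
    (n' ts ta k : ℕ) (hn : max (ω * ts) (ω * ta + ts) < n') (hk : k ≤ ts)
    (M : Multiset α) (hM : M.card = n' - ts + k) :
    (safe 𝒦 (max k ta) M).Nonempty := by
  classical
  obtain ⟨hn1, hn2⟩ := max_lt_iff.mp hn
  -- M is nonempty, so α is nonempty
  have hMcard : 0 < M.card := by omega
  have hα : Nonempty α := by
    obtain ⟨a, _⟩ := Multiset.card_pos_iff_exists_mem.mp hMcard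
    exact ⟨a⟩
  -- ω ≥ 1
  have hω : 1 ≤ ω := by
    by_contra h
    have hω0 : ω = 0 := by omega
    have hP : HellyProp 𝒦 0 := hω0 ▸ hHelly.1
    have := hP {∅} (by simp [hempty])
      (fun G hG hcard => by
        have : G = ∅ := Finset.card_eq_zero.mp (Nat.le_zero.mp hcard)
        simp [this])
    simp at this
  set j := max k ta with hj
  -- key numeric bound
  have hkey : ω * j < M.card := by
    rcases max_cases k ta with ⟨hmax, hle⟩ | ⟨hmax, hle⟩ <;> rw [hj, hmax]
    · -- j = k, ta ≤ k
      have h1 : ω * ts = ω * k + ω * (ts - k) := by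
        rw [← Nat.mul_add]; congr 1; omega
      have h2 : ts - k ≤ ω * (ts - k) := Nat.le_mul_of_pos_left _ hω
      omega
    · -- j = ta, k ≤ ta
      omega
  have hjM : j ≤ M.card := le_trans (Nat.le_mul_of_pos_left _ hω) hkey.le
  -- the finite family of submultisets
  set Sfin : Finset (Multiset α) :=
    (M.powerset.filter fun A => A.card = M.card - j).toFinset with hSfin
  have hmemS : ∀ A : Multiset α, A ∈ Sfin ↔ A ≤ M ∧ A.card = M.card - j := by
    intro A
    simp [hSfin, Multiset.mem_filter, Multiset.mem_powerset]
  set F : Finset (Set α) := Sfin.image (fun A => hull 𝒦 {x | x ∈ A}) with hF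
  have hFsub : ↑F ⊆ 𝒦 := by
    intro K hK
    simp only [hF, Finset.coe_image, Set.mem_image] at hK
    obtain ⟨A, _, rfl⟩ := hK
    exact hull_mem 𝒦 hinter _
  have hHellyApp : (⋂₀ (F : Set (Set α))).Nonempty := by
    refine hHelly.1 F hFsub ?_
    intro G hG hGcard
    -- choose a preimage for each element of G
    have hchoice : ∀ K : {K // K ∈ G}, ∃ A : Multiset α,
        (A ≤ M ∧ A.card = M.card - j) ∧ hull 𝒦 {x | x ∈ A} = (K : Set α) := by
      rintro ⟨K, hK⟩
      have := hG hK
      simp only [hF, Finset.mem_image] at this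
      obtain ⟨A, hA, hAK⟩ := this
      exact ⟨A, (hmemS A).mp hA, hAK⟩
    choose φ hφ1 hφ2 using hchoice
    -- common sub-multiset
    set B : Multiset α := ∑ K ∈ G.attach, (M - φ K) with hB
    have hBcard : B.card ≤ ω * j := by
      have hcs : B.card = ∑ K ∈ G.attach, (M - φ K).card := by
        rw [hB]
        induction G.attach using Finset.cons_induction with
        | empty => simp
        | cons a s ha ih => simp [Finset.sum_cons, ih]
      rw [hcs]
      calc ∑ K ∈ G.attach, (M - φ K).card
          ≤ ∑ _K ∈ G.attach, j := by
            refine Finset.sum_le_sum ?_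
            intro K _
            have h1 := (hφ1 K).1
            have h2 := (hφ1 K).2
            rw [Multiset.card_sub h1]
            omega
        _ = G.card * j := by rw [Finset.sum_const, Finset.card_attach, smul_eq_mul]
        _ ≤ ω * j := Nat.mul_le_mul_right _ hGcard
    set D : Multiset α := M - B with hD
    have hDcard : 0 < D.card := by
      have h1 : M ≤ (M - B) + B := le_tsub_add
      have h2 : M.card ≤ (M - B).card + B.card := by
        have := Multiset.card_le_card h1
        simpa using this
      have : (M - B).card = D.card := rfl
      omega
    obtain ⟨x, hx⟩ := Multiset.card_pos_iff_exists_mem.mp hDcard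
    refine ⟨x, ?_⟩
    rintro K hK
    have hKG : K ∈ G := hK
    have hDle : D ≤ φ ⟨K, hKG⟩ := by
      have hsingle : M - φ ⟨K, hKG⟩ ≤ B := by
        refine Finset.single_le_sum (f := fun K => M - φ K) ?_ (Finset.mem_attach _ ⟨K, hKG⟩)
        intro i _
        exact bot_le
      calc D ≤ M - (M - φ ⟨K, hKG⟩) := tsub_le_tsub_left hsingle M
        _ = φ ⟨K, hKG⟩ := tsub_tsub_cancel_of_le (hφ1 ⟨K, hKG⟩).1
    have hxA : x ∈ φ ⟨K, hKG⟩ := Multiset.mem_of_le hDle hx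
    have := subset_hull 𝒦 {y | y ∈ φ ⟨K, hKG⟩} hxA
    rw [hφ2 ⟨K, hKG⟩] at this
    exact this
  obtain ⟨x, hx⟩ := hHellyApp
  refine ⟨x, ?_⟩
  simp only [safe, Set.mem_iInter]
  intro A hA
  have hAF : hull 𝒦 {y | y ∈ A} ∈ F := by
    rw [hF]
    exact Finset.mem_image_of_mem _ ((hmemS A).mpr hA)
  exact hx _ hAF
end

section
/- Let S be a finite set of n points in ℝ^d and ω = d + 1. Then the intersection ⋂_{A ⊆ S, |S∖A| < n/ω} conv(A), taken over all subsets A of S whose complement in S has fewer than n/(d+1) elements, is a nonempty subset of conv(S). -/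
/-- For a finite set `S` of `n` points in `ℝ^d`, the intersection of
`conv(A)` over all `A ⊆ S` with `|S ∖ A| < n/(d+1)` is a nonempty subset of
`conv(S)`. -/
theorem stmt8 (d n : ℕ) (hd : 1 ≤ d) (S : Finset (Fin d → ℝ))
    (hS : S.card = n) (hn : 1 ≤ n) :
    (⋂ A ∈ {A : Finset (Fin d → ℝ) | A ⊆ S ∧ (S \ A).card * (d + 1) < n},
        convexHull ℝ (A : Set (Fin d → ℝ))).Nonempty ∧
      (⋂ A ∈ {A : Finset (Fin d → ℝ) | A ⊆ S ∧ (S \ A).card * (d + 1) < n},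
        convexHull ℝ (A : Set (Fin d → ℝ))) ⊆ convexHull ℝ (S : Set (Fin d → ℝ)) := by
  classical
  set t : Finset (Finset (Fin d → ℝ)) :=
    S.powerset.filter (fun A => (S \ A).card * (d + 1) < n) with ht
  have hmem : ∀ A : Finset (Fin d → ℝ),
      A ∈ ({A : Finset (Fin d → ℝ) | A ⊆ S ∧ (S \ A).card * (d + 1) < n} :
        Set (Finset (Fin d → ℝ))) ↔ A ∈ t := by
    intro A
    simp [ht, Finset.mem_filter, Finset.mem_powerset, Set.mem_setOf_eq]
  have hkey : (⋂ A ∈ {A : Finset (Fin d → ℝ) | A ⊆ S ∧ (S \ A).card * (d + 1) < n},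
      convexHull ℝ (A : Set (Fin d → ℝ)))
      = ⋂ A ∈ t, convexHull ℝ (A : Set (Fin d → ℝ)) := by
    ext x
    simp only [Set.mem_iInter]
    constructor
    · intro h A hA; exact h A ((hmem A).2 hA)
    · intro h A hA; exact h A ((hmem A).1 hA)
  have hSt : S ∈ t := by
    simp only [ht, Finset.mem_filter, Finset.mem_powerset]
    refine ⟨le_refl _, ?_⟩
    simp [Finset.sdiff_self]
    omega
  constructor
  · rw [hkey]
    apply Convex.helly_theorem' (𝕜 := ℝ)
    · intro A _; exact convex_convexHull ℝ _
    · intro I hI hIcard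
      -- find a point in all A ∈ I
      have hrank : Module.finrank ℝ (Fin d → ℝ) = d := Module.finrank_fin_fun ℝ
      rw [hrank] at hIcard
      have hcardb : ∀ A ∈ I, (S \ A).card ≤ (n - 1) / (d + 1) := by
        intro A hA
        have := hI hA
        rw [ht, Finset.mem_filter] at this
        have h2 : (S \ A).card * (d + 1) ≤ n - 1 := by omega
        exact Nat.le_div_iff_mul_le (by omega) |>.2 h2
      set U : Finset (Fin d → ℝ) := I.biUnion (fun A => S \ A) with hU
      have hUcard : U.card < n := by
        calc U.card ≤ ∑ A ∈ I, (S \ A).card := Finset.card_biUnion_le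
          _ ≤ ∑ _A ∈ I, (n - 1) / (d + 1) := Finset.sum_le_sum hcardb
          _ = I.card * ((n - 1) / (d + 1)) := by rw [Finset.sum_const, smul_eq_mul]
          _ ≤ (d + 1) * ((n - 1) / (d + 1)) := by
              exact Nat.mul_le_mul_right _ hIcard
          _ ≤ n - 1 := Nat.mul_div_le _ _
          _ < n := by omega
      have hne : (S \ U).Nonempty := by
        apply Finset.card_pos.1
        have : U.card < S.card := by omega
        have hle := Finset.card_le_card (Finset.sdiff_subset (s := S) (t := U))
        have := Finset.le_card_sdiff U S
        omega
      obtain ⟨x, hx⟩ := hne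
      rw [Finset.mem_sdiff] at hx
      refine ⟨x, Set.mem_iInter₂.2 fun A hA => ?_⟩
      apply subset_convexHull
      have hxA : x ∈ A := by
        by_contra hxA
        exact hx.2 (Finset.mem_biUnion.2 ⟨A, hA, Finset.mem_sdiff.2 ⟨hx.1, hxA⟩⟩)
      exact_mod_cast hxA
  · intro x hx
    have := Set.mem_iInter₂.1 hx S ((hmem S).2 hSt)
    exact this
end

section
/- Fix a function H : Σ → Δ (a 'hash'). Define the Merkle root of a nonempty list of values recursively: the root of a single leaf x is H(leaf(x)), and the root of a balanced binary tree over a list is H(node(h_left, h_right)) where h_left, h_right are the roots of the left and right halves. If two distinct lists of equal length have the same Merkle root, then there exist distinct inputs a ≠ b with H(a) = H(b), i.e., a collision for H. -/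
/-! Contrapositive: for an injective hash, the root of a node determines the roots of both
halves, and lists of equal length are split at the same point, so by induction on the length
the Merkle root determines the list. -/

/-- The Merkle root of a nonempty list: a single leaf `x` hashes to
`H (leaf x)`; a longer list is split into halves and the root is
`H (node (root left, root right))`. Here `Sum.inl` plays the role of the
`leaf` injection and `Sum.inr` the role of the `node` injection (they are
injective with disjoint ranges). -/
def merkleRoot {V Δ : Type*} [Inhabited Δ] (H : V ⊕ (Δ × Δ) → Δ) : List V → Δ
  | [] => default
  | [x] => H (Sum.inl x)
  | x :: y :: l =>
      H (Sum.inr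
        (merkleRoot H ((x :: y :: l).take ((l.length + 2) / 2)),
         merkleRoot H ((x :: y :: l).drop ((l.length + 2) / 2))))
  termination_by l => l.length
  decreasing_by
    all_goals (simp [List.length_take, List.length_drop] <;> omega)

section

variable {V Δ : Type*} [Inhabited Δ] (H : V ⊕ (Δ × Δ) → Δ)

theorem merkleRoot_of_two_le_length {l : List V} (hl : 2 ≤ l.length) :
    merkleRoot H l = H (Sum.inr (merkleRoot H (l.take (l.length / 2)),
      merkleRoot H (l.drop (l.length / 2)))) := by
  match l, hl with
  | x :: y :: l, _ => rw [merkleRoot]; rfl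

theorem eq_of_merkleRoot_eq_of_injective (hH : Function.Injective H) :
    ∀ {l₁ l₂ : List V}, l₁.length = l₂.length →
      merkleRoot H l₁ = merkleRoot H l₂ → l₁ = l₂
  | [], [], _, _ => rfl
  | [x], [y], _, hroot => by
    rw [merkleRoot, merkleRoot] at hroot
    simpa using hH hroot
  | x :: y :: l, l₂, hlen, hroot => by
    have h₁ : 2 ≤ (x :: y :: l).length := by simp
    have h₂ : 2 ≤ l₂.length := hlen ▸ h₁
    rw [merkleRoot_of_two_le_length H h₁, merkleRoot_of_two_le_length H h₂, ← hlen] at hroot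
    obtain ⟨htake, hdrop⟩ := Prod.ext_iff.mp (Sum.inr_injective (hH hroot))
    rw [← List.take_append_drop ((x :: y :: l).length / 2) (x :: y :: l),
      ← List.take_append_drop ((x :: y :: l).length / 2) l₂,
      eq_of_merkleRoot_eq_of_injective hH (by simp [hlen]) htake,
      eq_of_merkleRoot_eq_of_injective hH (by simp [hlen]) hdrop]
  | [], _ :: _, hlen, _ | _ :: _, [], hlen, _ | [_], _ :: _ :: _, hlen, _ => by
    simp at hlen
termination_by l₁ => l₁.length
decreasing_by all_goals simp; omega

end

/-- if two distinct lists of equal length have the same Merkle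
root, then `H` has a collision. -/
theorem stmt13 {V Δ : Type*} [Inhabited Δ] (H : V ⊕ (Δ × Δ) → Δ)
    (l₁ l₂ : List V) (hlen : l₁.length = l₂.length) (hne : l₁ ≠ l₂)
    (hroot : merkleRoot H l₁ = merkleRoot H l₂) :
    ∃ a b : V ⊕ (Δ × Δ), a ≠ b ∧ H a = H b := by
  obtain ⟨a, b, hHab, hab⟩ := Function.not_injective_iff.mp fun hH =>
    hne (eq_of_merkleRoot_eq_of_injective H hH hlen hroot)
  exact ⟨a, b, hab, hHab⟩
end

section
/- Let 0 < α < β < 1 and μ > 0, and set ε = μ·(β/α − 1)/2. Suppose G' = (L ∪ R', E') is a (⌊α|L|⌋, ε)-extractor with |L| = |R'| = n, both sides D-regular, and ⌊αn⌋ ≥ 1. Form G = (L ∪ R, E) by partitioning R' into m = ⌊n/s⌋ groups (s = ⌊n/m'⌋ for a target m' ≤ n, each group of size s or s+1) and merging each group into a single right vertex. Then for every S ⊆ L with |S| ≤ α·|L|, the set Q = {v ∈ R : more than a β-fraction of the edges at v come from S} satisfies |Q| < μ·|R|. -/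
open Finset

/-- committee assignment via an extractor. `e` gives the edge
multiplicities of a `D`-biregular bipartite multigraph on `L = R' = Fin n` which
is a `(⌊αn⌋, ε)`-extractor with `ε = μ(β/α − 1)/2`. The right side is merged
into `m = ⌊n/s⌋` groups of size `s` or `s+1` via `g`. Then for every `S ⊆ L`
with `|S| ≤ αn`, the set `Q` of merged right vertices receiving more than a
`β`-fraction of their edges from `S` satisfies `|Q| < μ·m`. -/
theorem stmt16 (n D m s : ℕ) (α β μ ε : ℝ)
    (hα : 0 < α) (hαβ : α < β) (hβ1 : β < 1) (hμ : 0 < μ)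
    (hε : ε = μ * (β / α - 1) / 2)
    (e : Fin n → Fin n → ℕ)
    (hleft : ∀ u, ∑ v, e u v = D)
    (hright : ∀ v, ∑ u, e u v = D)
    (hk1 : 1 ≤ ⌊α * n⌋₊)
    (hext : ∀ S : Finset (Fin n), ⌊α * n⌋₊ ≤ S.card → ∀ T : Finset (Fin n),
      |(∑ u ∈ S, ∑ v ∈ T, (e u v : ℝ)) / (D * S.card) - (T.card : ℝ) / n| < ε)
    (hs : 1 ≤ s) (hsn : s ≤ n) (hm : m = n / s)
    (g : Fin n → Fin m)
    (hg : ∀ j : Fin m, (Finset.univ.filter fun v => g v = j).card = s ∨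
      (Finset.univ.filter fun v => g v = j).card = s + 1)
    (S : Finset (Fin n)) (hS : (S.card : ℝ) ≤ α * n)
    (Q : Finset (Fin m))
    (hQ : Q = Finset.univ.filter fun j =>
      β * (∑ u : Fin n, ∑ v ∈ Finset.univ.filter (fun v => g v = j), (e u v : ℝ)) <
        ∑ u ∈ S, ∑ v ∈ Finset.univ.filter (fun v => g v = j), (e u v : ℝ)) :
    (Q.card : ℝ) < μ * m := by
  have hs0 : 0 < s := hs
  have hm1 : 1 ≤ m := by subst hm; exact (Nat.one_le_div_iff hs0).2 hsn
  by_cases hQemp : Q = ∅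
  · subst hQemp
    have hm0 : (0:ℝ) < m := by exact_mod_cast hm1
    simpa using mul_pos hμ hm0
  have hQne : Q.Nonempty := Finset.nonempty_iff_ne_empty.2 hQemp
  have hn : 0 < n := by
    rcases Nat.eq_zero_or_pos n with h | h
    · subst h; norm_num at hk1
    · exact h
  have hnR : (0:ℝ) < n := by exact_mod_cast hn
  have hεpos : 0 < ε := by
    rw [hε]
    have h1 : 1 < β / α := (one_lt_div hα).2 hαβ
    nlinarith
  set k := ⌊α * n⌋₊ with hk
  have hkR : (k:ℝ) ≤ α * n := Nat.floor_le (by positivity)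
  have hk0 : (1:ℝ) ≤ (k:ℝ) := by exact_mod_cast hk1
  have hSk : S.card ≤ k := Nat.le_floor hS
  have hkn : k ≤ n := by
    have h1 : α * n ≤ (n:ℝ) := by nlinarith
    calc k ≤ ⌊(n:ℝ)⌋₊ := Nat.floor_le_floor h1
    _ = n := Nat.floor_natCast n
  obtain ⟨S', hSS', hS'card⟩ :=
    Finset.exists_superset_card_eq hSk (by simpa using hkn)
  set T : Finset (Fin n) := Finset.univ.filter (fun v => g v ∈ Q) with hT
  -- fiber notation
  set fib : Fin m → Finset (Fin n) := fun j => Finset.univ.filter (fun v => g v = j) with hfib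
  have key : ∀ (M : Type) (_ : AddCommMonoid M) (f : Fin n → M),
      ∑ v ∈ T, f v = ∑ j ∈ Q, ∑ v ∈ fib j, f v := by
    intro M _ f
    rw [← Finset.sum_fiberwise_of_maps_to (g := g)
      (fun v hv => (Finset.mem_filter.1 hv).2) f]
    refine Finset.sum_congr rfl fun j hj => Finset.sum_congr ?_ fun _ _ => rfl
    ext v
    simp only [hT, hfib, Finset.mem_filter, Finset.mem_univ, true_and]
    exact ⟨fun h => h.2, fun h => ⟨h ▸ hj, h⟩⟩
  have hTcard : (T.card : ℝ) = ∑ j ∈ Q, ((fib j).card : ℝ) := by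
    have hn1 := key ℕ inferInstance (fun _ => 1)
    simp only [Finset.sum_const, smul_eq_mul, mul_one] at hn1
    rw [hn1, Nat.cast_sum]
  have hfibs : ∀ j, (s : ℝ) ≤ ((fib j).card : ℝ) := by
    intro j
    rcases hg j with h | h
    · simp [hfib, h]
    · rw [hfib]; rw [h]; push_cast; linarith
  have hTs : (s : ℝ) * Q.card ≤ (T.card : ℝ) := by
    rw [hTcard]
    calc (s:ℝ) * Q.card = ∑ _j ∈ Q, (s:ℝ) := by
          rw [Finset.sum_const, nsmul_eq_mul]; ring
    _ ≤ ∑ j ∈ Q, ((fib j).card : ℝ) := Finset.sum_le_sum fun j _ => hfibs j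
  have fibD : ∀ j, ∑ u : Fin n, ∑ v ∈ fib j, (e u v : ℝ) = D * ((fib j).card : ℝ) := by
    intro j
    rw [Finset.sum_comm]
    have h1 : ∀ v ∈ fib j, ∑ u : Fin n, (e u v : ℝ) = (D : ℝ) := by
      intro v _
      exact_mod_cast hright v
    rw [Finset.sum_congr rfl h1, Finset.sum_const, nsmul_eq_mul, mul_comm]
  have hlow : β * ((D:ℝ) * T.card) < ∑ u ∈ S, ∑ v ∈ T, (e u v : ℝ) := by
    have h2 : ∑ u ∈ S, ∑ v ∈ T, (e u v : ℝ) = ∑ j ∈ Q, ∑ u ∈ S, ∑ v ∈ fib j, (e u v : ℝ) := by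
      rw [Finset.sum_comm (s := Q)]
      exact Finset.sum_congr rfl fun u _ => key ℝ inferInstance _
    rw [h2]
    calc β * ((D:ℝ) * T.card) = ∑ j ∈ Q, β * ((D:ℝ) * (fib j).card) := by
          rw [hTcard, Finset.mul_sum, Finset.mul_sum]
    _ < ∑ j ∈ Q, ∑ u ∈ S, ∑ v ∈ fib j, (e u v : ℝ) := by
          refine Finset.sum_lt_sum_of_nonempty hQne fun j hj => ?_
          have := (Finset.mem_filter.1 (hQ ▸ hj)).2
          rwa [show (Finset.univ.filter fun v => g v = j) = fib j from rfl, fibD j] at this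
  have hD : 0 < D := by
    rcases Nat.eq_zero_or_pos D with h | h
    · exfalso
      have he0 : ∀ u v, e u v = 0 := by
        intro u v
        have h1 := hleft u
        rw [h] at h1
        exact (Finset.sum_eq_zero_iff.1 h1) v (Finset.mem_univ v)
      rw [h] at hlow
      simp [he0] at hlow
    · exact h
  have hDR : (0:ℝ) < D := by exact_mod_cast hD
  -- use extractor on S'
  have hX := hext S' (le_of_eq hS'card.symm) T
  rw [hS'card] at hX
  have hmono : ∑ u ∈ S, ∑ v ∈ T, (e u v : ℝ) ≤ ∑ u ∈ S', ∑ v ∈ T, (e u v : ℝ) :=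
    Finset.sum_le_sum_of_subset_of_nonneg hSS' fun u _ _ =>
      Finset.sum_nonneg fun v _ => by positivity
  have hDk : (0:ℝ) < (D:ℝ) * k := mul_pos hDR (by linarith)
  have hXlt : ∑ u ∈ S', ∑ v ∈ T, (e u v : ℝ) < (D:ℝ) * k * ((T.card : ℝ)/n + ε) := by
    have h1 := (abs_lt.1 hX).2
    have h2 : (∑ u ∈ S', ∑ v ∈ T, (e u v : ℝ)) / ((D:ℝ) * k) < (T.card : ℝ)/n + ε := by
      linarith
    calc ∑ u ∈ S', ∑ v ∈ T, (e u v : ℝ)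
        = (∑ u ∈ S', ∑ v ∈ T, (e u v : ℝ)) / ((D:ℝ) * k) * ((D:ℝ) * k) := by
          field_simp
    _ < ((T.card : ℝ)/n + ε) * ((D:ℝ) * k) := by
          exact mul_lt_mul_of_pos_right h2 hDk
    _ = (D:ℝ) * k * ((T.card : ℝ)/n + ε) := by ring
  set t : ℝ := (T.card : ℝ) with ht
  have ht0 : 0 ≤ t := by positivity
  have h1 : β * ((D:ℝ) * t) < (D:ℝ) * k * (t/n + ε) := by
    calc β * ((D:ℝ) * t) < ∑ u ∈ S, ∑ v ∈ T, (e u v : ℝ) := hlow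
    _ ≤ ∑ u ∈ S', ∑ v ∈ T, (e u v : ℝ) := hmono
    _ < (D:ℝ) * k * (t/n + ε) := hXlt
  have h2 : β * t < (k:ℝ) * (t/n + ε) := by
    have h1' : (D:ℝ) * (β * t) < (D:ℝ) * ((k:ℝ) * (t/n + ε)) := by ring_nf; ring_nf at h1; linarith
    exact lt_of_mul_lt_mul_left h1' hDR.le
  have h3 : (k:ℝ) * (t/n + ε) ≤ α * n * (t/n + ε) := by
    apply mul_le_mul_of_nonneg_right hkR
    positivity
  have h4 : α * n * (t/n + ε) = α * t + α * n * ε := by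
    field_simp
  have hαε : α * ε = μ * (β - α) / 2 := by
    rw [hε]
    field_simp
  have h5 : t < n * μ / 2 := by
    have hba : 0 < β - α := by linarith
    have h6 : β * t < α * t + n * (μ * (β - α) / 2) := by
      have : α * n * ε = n * (α * ε) := by ring
      rw [this, hαε] at h4
      linarith
    have h7 : (β - α) * t < (β - α) * (n * μ / 2) := by ring_nf; ring_nf at h6; linarith
    exact lt_of_mul_lt_mul_left h7 hba.le
  -- n < s * (m + 1)
  have hnsm : n < s * (m + 1) := by
    have h8 := Nat.div_add_mod n s
    have h9 := Nat.mod_lt n hs0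
    calc n = s * (n / s) + n % s := h8.symm
    _ < s * (n / s) + s := by omega
    _ = s * (m + 1) := by rw [hm]; ring
  have hnsmR : (n:ℝ) < (s:ℝ) * (m + 1) := by exact_mod_cast hnsm
  have hsR : (1:ℝ) ≤ (s:ℝ) := by exact_mod_cast hs
  have hmR : (1:ℝ) ≤ (m:ℝ) := by exact_mod_cast hm1
  clear hext hX hXlt hmono hlow key fibD hTcard hfibs hQ hg hleft hright hS hSS' hS'card h1 h2 h3 h4
  have hfinal : (s:ℝ) * (Q.card : ℝ) < (s:ℝ) * (μ * m) := by
    have h10 : (n:ℝ) * μ / 2 < (s:ℝ) * (m + 1) * μ / 2 := by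
      have := mul_lt_mul_of_pos_right hnsmR (by positivity : (0:ℝ) < μ / 2)
      linarith [this]
    have h11 : (s:ℝ) * (m + 1) * μ / 2 ≤ (s:ℝ) * (μ * m) := by
      have h12 : (0:ℝ) ≤ (s:ℝ) * μ * ((m:ℝ) - 1) :=
        mul_nonneg (mul_nonneg (by linarith) hμ.le) (by linarith)
      ring_nf at h12 ⊢
      linarith
    linarith [hTs]
  have := lt_of_mul_lt_mul_left hfinal (by linarith : (0:ℝ) ≤ (s:ℝ))
  linarith
end

section
/- Let d ≥ 1 and let S be a finite set of points in ℝ^d with |S| = n ≥ 1. Let P = ⋂_{A ⊆ S, |S∖A| < n/(d+1)} conv(A). Then P is a nonempty, compact, convex polytope contained in conv(S); in particular, P has at least one extreme point (vertex). -/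
/-!
Each `conv A` is compact and convex, so `P` is a compact convex subset of `conv S`. It is nonempty
by Helly's theorem: any `d + 1` of the sets `A` together omit fewer than `n` points of `S`, so some
point of `S` lies in all of them. It is a polytope because it has only finitely many extreme
points: for each `A`, an extreme point `x` of `P` is a positive convex combination of some
`B ⊆ A`, and if another point `y ∈ P` is a positive combination of the same sets `B`, then `P`
contains `x + ε (x - y)` for small `ε > 0`, which forces `y = x`. Krein–Milman then shows that
`P` is the convex hull of its finitely many extreme points.
-/

open Finset Filter Topology Module

section Algebraic

variable {E : Type*} [AddCommGroup E] [Module ℝ E]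

def posConvexHull (B : Finset E) : Set E :=
  {x | ∃ w : E → ℝ, (∀ b ∈ B, 0 < w b) ∧ ∑ b ∈ B, w b = 1 ∧ ∑ b ∈ B, w b • b = x}

lemma exists_subset_mem_posConvexHull {A : Finset E} {x : E}
    (hx : x ∈ convexHull ℝ (A : Set E)) : ∃ B ⊆ A, x ∈ posConvexHull B := by
  classical
  obtain ⟨w, hw0, hw1, hwx⟩ := Finset.mem_convexHull'.1 hx
  refine ⟨A.filter (w · ≠ 0), filter_subset _ _, w, fun b hb => ?_, ?_, ?_⟩
  · obtain ⟨hbA, hb0⟩ := mem_filter.1 hb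
    exact (hw0 b hbA).lt_of_ne' hb0
  · rwa [sum_filter_ne_zero]
  · rwa [sum_filter_of_ne fun b _ hb => by contrapose! hb; rw [hb, zero_smul]]

lemma eventually_add_smul_sub_mem_convexHull {B : Finset E} {x y : E}
    (hx : x ∈ posConvexHull B) (hy : y ∈ posConvexHull B) :
    ∀ᶠ ε in 𝓝 (0 : ℝ), x + ε • (x - y) ∈ convexHull ℝ (B : Set E) := by
  obtain ⟨w, hw, hw1, hwx⟩ := hx
  obtain ⟨u, -, hu1, huy⟩ := hy
  have hpos : ∀ᶠ ε in 𝓝 (0 : ℝ), ∀ b ∈ B, 0 < (1 + ε) * w b - ε * u b :=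
    (eventually_all_finset B).2 fun b hb =>
      continuousAt_const.eventually_lt (by fun_prop) (by simpa using hw b hb)
  filter_upwards [hpos] with ε hε
  refine Finset.mem_convexHull'.2 ⟨fun b => (1 + ε) * w b - ε * u b, fun b hb => (hε b hb).le,
    ?_, ?_⟩
  · simp only [sum_sub_distrib, ← mul_sum, hw1, hu1]
    ring
  · simp only [sub_smul, mul_smul, sum_sub_distrib, ← smul_sum, hwx, huy]
    module

lemma eq_of_mem_extremePoints_of_add_smul_sub_mem {C : Set E} {x y : E} {ε : ℝ}
    (hx : x ∈ Set.extremePoints ℝ C) (hy : y ∈ C) (hε : 0 < ε) (hxy : x + ε • (x - y) ∈ C) :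
    y = x := by
  have hseg : x ∈ openSegment ℝ y (x + ε • (x - y)) := by
    refine ⟨ε / (1 + ε), 1 / (1 + ε), by positivity, by positivity, by field_simp; ring, ?_⟩
    match_scalars
    · field_simp
      ring
    · field_simp
  exact ((mem_extremePoints.1 hx).2 y hy _ hxy hseg).1

theorem finite_extremePoints_biInter_convexHull {𝒜 : Set (Finset E)} (h𝒜 : 𝒜.Finite) :
    (Set.extremePoints ℝ (⋂ A ∈ 𝒜, convexHull ℝ (A : Set E))).Finite := by
  classical
  set U := h𝒜.toFinset.sup id
  let σ : E → Finset (Finset E) := fun x => U.powerset.filter (x ∈ posConvexHull ·)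
  refine Set.Finite.of_finite_image ((U.powerset.powerset : Set _).toFinite.subset ?_) (f := σ) ?_
  · rintro _ ⟨x, -, rfl⟩
    exact mem_coe.2 (mem_powerset.2 (filter_subset _ _))
  intro x hx y hy hσ
  have hext : ∀ᶠ ε in 𝓝 (0 : ℝ), x + ε • (x - y) ∈ ⋂ A ∈ 𝒜, convexHull ℝ (A : Set E) := by
    simp only [Set.mem_iInter₂]
    refine (eventually_all_finite h𝒜).2 fun A hA => ?_
    obtain ⟨B, hBA, hxB⟩ := exists_subset_mem_posConvexHull (Set.mem_iInter₂.1 hx.1 A hA)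
    have hBU : B ⊆ U := hBA.trans (le_sup (f := id) (h𝒜.mem_toFinset.2 hA))
    have hyB : B ∈ σ y := hσ ▸ mem_filter.2 ⟨mem_powerset.2 hBU, hxB⟩
    filter_upwards [eventually_add_smul_sub_mem_convexHull hxB (mem_filter.1 hyB).2] with ε hε
    exact convexHull_mono hBA hε
  obtain ⟨ε, hmem, hε⟩ := ((hext.filter_mono nhdsWithin_le_nhds).and
    (self_mem_nhdsWithin : Set.Ioi (0 : ℝ) ∈ 𝓝[>] 0)).exists
  exact (eq_of_mem_extremePoints_of_add_smul_sub_mem hx hy.1 hε hmem).symm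

end Algebraic

lemma exists_mem_forall_mem_of_sum_card_sdiff_lt {α ι : Type*} [DecidableEq α] {S : Finset α}
    {I : Finset ι} {A : ι → Finset α} (h : ∑ i ∈ I, #(S \ A i) < #S) :
    ∃ s ∈ S, ∀ i ∈ I, s ∈ A i := by
  have hcard : #(I.biUnion fun i => S \ A i) < #S := card_biUnion_le.trans_lt h
  obtain ⟨s, hs, hsU⟩ := not_subset.1 fun hsub => (card_le_card hsub).not_gt hcard
  refine ⟨s, hs, fun i hi => ?_⟩
  by_contra hsA
  exact hsU (mem_biUnion.2 ⟨i, hi, mem_sdiff.2 ⟨hs, hsA⟩⟩)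

section Topological

variable {E : Type*} [AddCommGroup E] [Module ℝ E] [TopologicalSpace E] [T2Space E]
  [IsTopologicalAddGroup E] [ContinuousSMul ℝ E]

theorem nonempty_biInter_convexHull_of_card_sdiff_mul_lt [FiniteDimensional ℝ E] [DecidableEq E] (S : Finset E) (𝒜 : Set (Finset E))
    (h𝒜 : ∀ A ∈ 𝒜, #(S \ A) * (finrank ℝ E + 1) < #S) :
    (⋂ A ∈ 𝒜, convexHull ℝ (A : Set E)).Nonempty := by
  rw [Set.biInter_eq_iInter]
  refine Convex.helly_theorem_compact' (𝕜 := ℝ) (fun _ => convex_convexHull ℝ _)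
    (fun A => A.1.finite_toSet.isCompact_convexHull ℝ) fun I hI => ?_
  rcases I.eq_empty_or_nonempty with rfl | ⟨A₀, -⟩
  · simp
  have hsum : (∑ A ∈ I, #(S \ A.1)) * (finrank ℝ E + 1) ≤ (#S - 1) * (finrank ℝ E + 1) :=
    calc (∑ A ∈ I, #(S \ A.1)) * (finrank ℝ E + 1)
        = ∑ A ∈ I, #(S \ A.1) * (finrank ℝ E + 1) := sum_mul _ _ _
      _ ≤ ∑ _A ∈ I, (#S - 1) := sum_le_sum fun A _ => Nat.le_sub_one_of_lt (h𝒜 A A.2)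
      _ = #I * (#S - 1) := by rw [sum_const, smul_eq_mul]
      _ ≤ (#S - 1) * (finrank ℝ E + 1) := by rw [mul_comm]; exact Nat.mul_le_mul_left _ hI
  have hS : 0 < #S := (Nat.zero_le _).trans_lt (h𝒜 A₀ A₀.2)
  obtain ⟨s, -, hs⟩ := exists_mem_forall_mem_of_sum_card_sdiff_lt (S := S) (I := I) (A := Subtype.val)
    (by have := Nat.le_of_mul_le_mul_right hsum (Nat.succ_pos _); omega)
  exact ⟨s, Set.mem_iInter₂.2 fun A hA => subset_convexHull ℝ _ (hs A hA)⟩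

theorem IsCompact.eq_convexHull_extremePoints_of_finite [LocallyConvexSpace ℝ E] {s : Set E}
    (hs : IsCompact s) (hconv : Convex ℝ s) (hfin : (Set.extremePoints ℝ s).Finite) :
    s = convexHull ℝ (Set.extremePoints ℝ s) := by
  simpa [(hfin.isClosed_convexHull ℝ).closure_eq] using
    (closure_convexHull_extremePoints hs hconv).symm

end Topological

theorem stmt17_general (d : ℕ) (S : Finset (Fin d → ℝ)) (n : ℕ)
    (hS : S.card = n) (hn : 1 ≤ n)
    (P : Set (Fin d → ℝ))
    (hP : P = ⋂ A ∈ {A : Finset (Fin d → ℝ) | A ⊆ S ∧ (S \ A).card * (d + 1) < n},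
      convexHull ℝ (A : Set (Fin d → ℝ))) :
    P.Nonempty ∧ IsCompact P ∧ Convex ℝ P ∧ P ⊆ convexHull ℝ (S : Set (Fin d → ℝ)) ∧
      (∃ F : Finset (Fin d → ℝ), P = convexHull ℝ (F : Set (Fin d → ℝ))) ∧
      (Set.extremePoints ℝ P).Nonempty := by
  subst hP hS
  set 𝒜 := {A : Finset (Fin d → ℝ) | A ⊆ S ∧ #(S \ A) * (d + 1) < #S}
  have h𝒜 : 𝒜.Finite := S.powerset.finite_toSet.subset fun A hA => mem_powerset.2 hA.1
  have hS𝒜 : S ∈ 𝒜 := ⟨subset_rfl, by simpa using hn⟩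
  have hsub : ⋂ A ∈ 𝒜, convexHull ℝ (A : Set (Fin d → ℝ)) ⊆ convexHull ℝ ↑S :=
    Set.biInter_subset_of_mem hS𝒜
  have hconv : Convex ℝ (⋂ A ∈ 𝒜, convexHull ℝ (A : Set (Fin d → ℝ))) :=
    convex_iInter₂ fun _ _ => convex_convexHull ℝ _
  have hcpt := (S.finite_toSet.isCompact_convexHull ℝ).of_isClosed_subset
    (isClosed_biInter fun A _ => A.finite_toSet.isClosed_convexHull ℝ) hsub
  have hne := nonempty_biInter_convexHull_of_card_sdiff_mul_lt S 𝒜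
    (by rw [finrank_fin_fun]; exact fun A hA => hA.2)
  have hfin := finite_extremePoints_biInter_convexHull h𝒜
  refine ⟨hne, hcpt, hconv, hsub, ⟨hfin.toFinset, ?_⟩, hcpt.extremePoints_nonempty hne⟩
  rw [Set.Finite.coe_toFinset]
  exact hcpt.eq_convexHull_extremePoints_of_finite hconv hfin

/-- for a finite set `S` of `n ≥ 1` points in `ℝ^d`, the set
`P = ⋂_{A ⊆ S, |S∖A| < n/(d+1)} conv(A)` is a nonempty compact convex polytope
contained in `conv(S)`; in particular it has an extreme point. -/
theorem stmt17 (d : ℕ) (hd : 1 ≤ d) (S : Finset (Fin d → ℝ)) (n : ℕ)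
    (hS : S.card = n) (hn : 1 ≤ n)
    (P : Set (Fin d → ℝ))
    (hP : P = ⋂ A ∈ {A : Finset (Fin d → ℝ) | A ⊆ S ∧ (S \ A).card * (d + 1) < n},
      convexHull ℝ (A : Set (Fin d → ℝ))) :
    P.Nonempty ∧ IsCompact P ∧ Convex ℝ P ∧ P ⊆ convexHull ℝ (S : Set (Fin d → ℝ)) ∧
      (∃ F : Finset (Fin d → ℝ), P = convexHull ℝ (F : Set (Fin d → ℝ))) ∧
      (Set.extremePoints ℝ P).Nonempty :=
  stmt17_general d S n hS hn P hP
end
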